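/- If there exists an integer Heffter array H(m,n;s,t), then there exists a signed magic rectangle SMR(2m, 2n; s, t) (obtained as the block-diagonal array with blocks A and −A). -/

import Mathlib

/-- The set `X` of allowed entries of a signed magic rectangle with `m` rows and
`r` filled cells per row: `{0, ±1, …, ±(mr-1)/2}` if `mr` is odd, and
`{±1, …, ±(mr/2)}` if `mr` is even. -/
noncomputable def smrEntrySet (m r : ℕ) : Finset ℤ :=
  if (m * r) % 2 = 1 then
    Finset.Icc (-(((m : ℤ) * r - 1) / 2)) (((m : ℤ) * r - 1) / 2)
  else
    (Finset.Icc (-((m : ℤ) * r / 2)) ((m : ℤ) * r / 2)).erase 0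

/-- `A` is a signed magic rectangle `SMR(m, n; r, s)`: an `m × n` array with cells
either empty (`none`) or filled with an integer, having exactly `r` filled cells in
each row and `s` in each column, whose entries are exactly the elements of the set
`smrEntrySet m r`, each appearing exactly once, and all of whose row sums and column
sums are zero. -/
def IsSMR (m n r s : ℕ) (A : Fin m → Fin n → Option ℤ) : Prop :=
  (∀ i : Fin m, (Finset.univ.filter fun j : Fin n => A i j ≠ none).card = r) ∧
  (∀ j : Fin n, (Finset.univ.filter fun i : Fin m => A i j ≠ none).card = s) ∧
  (∀ (i : Fin m) (j : Fin n) (x : ℤ), A i j = some x → x ∈ smrEntrySet m r) ∧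
  (∀ x ∈ smrEntrySet m r, ∃! p : Fin m × Fin n, A p.1 p.2 = some x) ∧
  (∀ i : Fin m, ∑ j : Fin n, (A i j).getD 0 = 0) ∧
  (∀ j : Fin n, ∑ i : Fin m, (A i j).getD 0 = 0)

/-- `A` is an integer Heffter array `H(m, n; s, t)`: an `m × n` array with cells
either empty (`none`) or filled with an integer from `{±1, …, ±ms}`, having exactly
`s` filled cells in each row and `t` in each column, all of whose row sums and
column sums are zero, and such that for every `x ∈ {1, …, ms}` exactly one of `x`
and `-x` appears in the array, in exactly one cell. -/
def IsHeffter (m n s t : ℕ) (A : Fin m → Fin n → Option ℤ) : Prop :=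
  (∀ i : Fin m, (Finset.univ.filter fun j : Fin n => A i j ≠ none).card = s) ∧
  (∀ j : Fin n, (Finset.univ.filter fun i : Fin m => A i j ≠ none).card = t) ∧
  (∀ (i : Fin m) (j : Fin n) (x : ℤ), A i j = some x → 1 ≤ |x| ∧ |x| ≤ (m : ℤ) * s) ∧
  (∀ x : ℤ, 1 ≤ x → x ≤ (m : ℤ) * s →
    ∃! p : Fin m × Fin n, A p.1 p.2 = some x ∨ A p.1 p.2 = some (-x)) ∧
  (∀ i : Fin m, ∑ j : Fin n, (A i j).getD 0 = 0) ∧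
  (∀ j : Fin n, ∑ i : Fin m, (A i j).getD 0 = 0)

/-!
Negating a Heffter array `A` flips the sign choice in every cell, so the entries of `A` and `-A`
together are `±1, …, ±ms`, each exactly once: a value `x` occurs in `diag(A, -A)` either in the
`A` block where `A = x` or in the `-A` block where `A = -x`, and the Heffter condition says
exactly one cell of `A` holds `x` or `-x`. Since `2ms` is even this is precisely the entry set of
an `SMR(2m, 2n; s, t)`; the counts of filled cells and the zero sums of the rows and columns of
`A` pass to both blocks, and the empty off-diagonal blocks change none of them.
-/

open Finset Matrix

variable {α β α' β' R : Type*}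

theorem Option.map_neg_eq_some [InvolutiveNeg R] {o : Option R} {x : R} :
    o.map Neg.neg = some x ↔ o = some (-x) := by
  cases o <;> simp [neg_eq_iff_eq_neg]

theorem Option.getD_map_neg [SubtractionMonoid R] (o : Option R) :
    (o.map Neg.neg).getD 0 = -o.getD 0 := by
  cases o <;> simp

def blockDiagNeg [Neg R] (A : Matrix α β (Option R)) : Matrix (α ⊕ α) (β ⊕ β) (Option R) :=
  fromBlocks A (of fun _ _ => none) (of fun _ _ => none) (A.map (Option.map Neg.neg))

theorem blockDiagNeg_transpose [Neg R] (A : Matrix α β (Option R)) :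
    (blockDiagNeg A)ᵀ = blockDiagNeg Aᵀ := by
  rw [blockDiagNeg, blockDiagNeg, fromBlocks_transpose, transpose_map]
  rfl

theorem blockDiagNeg_entries [InvolutiveNeg R] {A : Matrix α β (Option R)} {P : R → Prop}
    (hP : ∀ x, P x → P (-x)) (hA : ∀ i j x, A i j = some x → P x) :
    ∀ u v x, blockDiagNeg A u v = some x → P x := by
  rintro (i | i) (j | j) x hx <;> simp [blockDiagNeg] at hx
  · exact hA i j x hx
  · obtain ⟨y, hy, rfl⟩ := hx
    exact hP y (hA i j y hy)

theorem existsUnique_submatrix_eq_some {M : Matrix α β R} {x : R} (e : α' ≃ α) (f : β' ≃ β)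
    (h : ∃! q : α × β, M q.1 q.2 = x) : ∃! p : α' × β', M.submatrix e f p.1 p.2 = x :=
  (e.prodCongr f).existsUnique_congr_right.2 h

section Rows

variable [Fintype β]

def FilledPerRow [DecidableEq R] (M : Matrix α β (Option R)) (s : ℕ) : Prop :=
  ∀ i, #{j | M i j ≠ none} = s

def RowSumsZero [AddCommMonoid R] (M : Matrix α β (Option R)) : Prop :=
  ∀ i, ∑ j, (M i j).getD 0 = 0

theorem FilledPerRow.submatrix [Fintype β'] [DecidableEq R] {M : Matrix α β (Option R)} {s : ℕ}
    (h : FilledPerRow M s) (e : α' → α) (f : β' ≃ β) : FilledPerRow (M.submatrix e f) s := by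
  intro i
  rw [← h (e i)]
  refine card_equiv f fun j => ?_
  rw [mem_filter, mem_filter]
  simp

theorem RowSumsZero.submatrix [Fintype β'] [AddCommMonoid R] {M : Matrix α β (Option R)}
    (h : RowSumsZero M) (e : α' → α) (f : β' ≃ β) : RowSumsZero (M.submatrix e f) :=
  fun i => (f.sum_comp fun j => (M (e i) j).getD 0).trans (h (e i))

theorem FilledPerRow.blockDiagNeg [Neg R] [DecidableEq R] {A : Matrix α β (Option R)} {s : ℕ}
    (h : FilledPerRow A s) : FilledPerRow (blockDiagNeg A) s := by
  rintro (i | i) <;> rw [← h i, card_filter, card_filter, Fintype.sum_sum_type]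
  · simp only [_root_.blockDiagNeg, fromBlocks_apply₁₁, fromBlocks_apply₁₂, of_apply, ne_eq,
      not_true_eq_false, if_false, sum_const_zero, add_zero]
    -- the two sides differ only in the `Decidable` instances of their `if`s
    rfl
  · simp [_root_.blockDiagNeg]

theorem RowSumsZero.blockDiagNeg [AddCommGroup R] {A : Matrix α β (Option R)}
    (h : RowSumsZero A) : RowSumsZero (blockDiagNeg A) := by
  rintro (i | i) <;> simp [_root_.blockDiagNeg, Fintype.sum_sum_type, Option.getD_map_neg, h i]

end Rows

section Cells

variable [Fintype α] [Fintype β] [InvolutiveNeg R]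

theorem card_blockDiagNeg_eq_some [DecidableEq R] (A : Matrix α β (Option R)) (x : R) :
    #{q : (α ⊕ α) × (β ⊕ β) | blockDiagNeg A q.1 q.2 = some x} =
      #{p : α × β | A p.1 p.2 = some x} + #{p : α × β | A p.1 p.2 = some (-x)} := by
  rw [card_filter, card_filter, card_filter]
  simp only [Fintype.sum_prod_type, Fintype.sum_sum_type, blockDiagNeg, fromBlocks_apply₁₁,
    fromBlocks_apply₁₂, fromBlocks_apply₂₁, fromBlocks_apply₂₂, of_apply, map_apply,
    Option.map_neg_eq_some, reduceCtorEq, if_false, sum_const_zero, add_zero, zero_add]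
  rfl

theorem existsUnique_blockDiagNeg_eq_some {A : Matrix α β (Option R)} {x : R} (hx : x ≠ -x)
    (h : ∃! p : α × β, A p.1 p.2 = some x ∨ A p.1 p.2 = some (-x)) :
    ∃! q : (α ⊕ α) × (β ⊕ β), blockDiagNeg A q.1 q.2 = some x := by
  classical
  rw [Fintype.existsUnique_iff_card_one] at h ⊢
  rw [card_blockDiagNeg_eq_some, ← h, filter_or, card_union_of_disjoint]
  exact disjoint_filter.2 fun p _ h₁ h₂ => hx (Option.some.inj (h₁.symm.trans h₂))

end Cells

theorem mem_smrEntrySet_two_mul {m s : ℕ} {x : ℤ} :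
    x ∈ smrEntrySet (2 * m) s ↔ 1 ≤ |x| ∧ |x| ≤ m * s := by
  have hmod : ¬ 2 * m * s % 2 = 1 := by
    rw [mul_assoc, Nat.mul_mod_right]
    omega
  have hhalf : ((2 * m : ℕ) : ℤ) * s / 2 = m * s := by
    push_cast
    rw [mul_assoc, Int.mul_ediv_cancel_left _ two_ne_zero]
  rw [smrEntrySet, if_neg hmod, hhalf, mem_erase, mem_Icc, ← abs_le, Order.one_le_iff_pos,
    abs_pos]

theorem IsHeffter.existsUnique_eq_some_or_neg {m n s t : ℕ} {A : Fin m → Fin n → Option ℤ}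
    (hA : IsHeffter m n s t A) {x : ℤ} (hx : 1 ≤ |x|) (hx' : |x| ≤ m * s) :
    ∃! p : Fin m × Fin n, A p.1 p.2 = some x ∨ A p.1 p.2 = some (-x) := by
  rcases abs_choice x with h | h <;> rw [h] at hx hx'
  · exact hA.2.2.2.1 x hx hx'
  · simpa only [neg_neg, or_comm] using hA.2.2.2.1 (-x) hx hx'

def finTwoMulEquiv (m : ℕ) : Fin (2 * m) ≃ Fin m ⊕ Fin m :=
  (finCongr (two_mul m)).trans finSumFinEquiv.symm

theorem IsHeffter.isSMR_blockDiagNeg {m n s t : ℕ} {A : Matrix (Fin m) (Fin n) (Option ℤ)}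
    (hA : IsHeffter m n s t A) :
    IsSMR (2 * m) (2 * n) s t
      ((blockDiagNeg A).submatrix (finTwoMulEquiv m) (finTwoMulEquiv n)) := by
  have ⟨hrow, hcol, hbound, _, hrowsum, hcolsum⟩ := hA
  have hT : ((blockDiagNeg A).submatrix (finTwoMulEquiv m) (finTwoMulEquiv n))ᵀ =
      (blockDiagNeg Aᵀ).submatrix (finTwoMulEquiv n) (finTwoMulEquiv m) := by
    rw [transpose_submatrix, blockDiagNeg_transpose]
  refine ⟨?_, ?_, ?_, ?_, ?_, ?_⟩
  · exact (FilledPerRow.blockDiagNeg hrow).submatrix _ _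
  · have := (FilledPerRow.blockDiagNeg (A := Aᵀ) hcol).submatrix
      (finTwoMulEquiv n) (finTwoMulEquiv m)
    rwa [← hT] at this
  · intro i j x hx
    rw [mem_smrEntrySet_two_mul]
    exact blockDiagNeg_entries (fun y hy => by rwa [abs_neg]) hbound _ _ x hx
  · intro x hx
    rw [mem_smrEntrySet_two_mul] at hx
    have hx0 : x ≠ -x := mt CharZero.eq_neg_self_iff.1 (abs_pos.1 (zero_lt_one.trans_le hx.1))
    exact existsUnique_submatrix_eq_some _ _
      (existsUnique_blockDiagNeg_eq_some hx0 (hA.existsUnique_eq_some_or_neg hx.1 hx.2))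
  · exact (RowSumsZero.blockDiagNeg hrowsum).submatrix _ _
  · have := (RowSumsZero.blockDiagNeg (A := Aᵀ) hcolsum).submatrix
      (finTwoMulEquiv n) (finTwoMulEquiv m)
    rwa [← hT] at this

/-- If there exists an integer Heffter array `H(m, n; s, t)`, then there exists a
signed magic rectangle `SMR(2m, 2n; s, t)` (obtained as the block-diagonal array
with blocks `A` and `-A`). -/
theorem smr_of_heffter_block_diagonal (m n s t : ℕ)
    (h : ∃ A : Fin m → Fin n → Option ℤ, IsHeffter m n s t A) :
    ∃ B : Fin (2 * m) → Fin (2 * n) → Option ℤ, IsSMR (2 * m) (2 * n) s t B := by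
  obtain ⟨A, hA⟩ := h
  exact ⟨_, hA.isSMR_blockDiagNeg⟩
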